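/- With the same setup as the unnormalized magnetic signed Laplacian, and assuming additionally that D̃_{ii} > 0 for all i, the normalized magnetic signed Laplacian L_N^{(q)} = I - D̃^{-1/2} H^{(q)} D̃^{-1/2} is positive semidefinite. -/

import Mathlib

open Complex Matrix BigOperators
open scoped ComplexOrder

noncomputable def Hmat {n : ℕ} (q : ℝ) (A : Matrix (Fin n) (Fin n) ℝ) :
    Matrix (Fin n) (Fin n) ℂ := fun i j =>
  (((A i j + A j i) / 2 : ℝ) : ℂ) *
    Complex.exp (Complex.I * ((2 * Real.pi * q * (A i j - A j i) : ℝ) : ℂ))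

noncomputable def dtilde {n : ℕ} (A : Matrix (Fin n) (Fin n) ℝ) : Fin n → ℝ :=
  fun i => (1 / 2) * ∑ j, (|A i j| + |A j i|)

noncomputable def Dmat {n : ℕ} (A : Matrix (Fin n) (Fin n) ℝ) :
    Matrix (Fin n) (Fin n) ℂ :=
  Matrix.diagonal fun i => ((dtilde A i : ℝ) : ℂ)

noncomputable def LU {n : ℕ} (q : ℝ) (A : Matrix (Fin n) (Fin n) ℝ) :
    Matrix (Fin n) (Fin n) ℂ := Dmat A - Hmat q A

noncomputable def Dhalf {n : ℕ} (A : Matrix (Fin n) (Fin n) ℝ) :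
    Matrix (Fin n) (Fin n) ℂ :=
  Matrix.diagonal fun i => (((Real.sqrt (dtilde A i))⁻¹ : ℝ) : ℂ)

noncomputable def LN {n : ℕ} (q : ℝ) (A : Matrix (Fin n) (Fin n) ℝ) :
    Matrix (Fin n) (Fin n) ℂ := 1 - Dhalf A * Hmat q A * Dhalf A

lemma Hmat_isHermitian {n : ℕ} (q : ℝ) (A : Matrix (Fin n) (Fin n) ℝ) :
    (Hmat q A).IsHermitian := by
  ext i j
  simp only [Hmat, conjTranspose_apply, RCLike.star_def, _root_.map_mul, Complex.conj_ofReal,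
    ← Complex.exp_conj, Complex.conj_I]
  rw [show ((A j i + A i j) / 2 : ℝ) = ((A i j + A j i) / 2 : ℝ) from by ring,
    show -Complex.I * ((2 * Real.pi * q * (A j i - A i j) : ℝ) : ℂ)
        = Complex.I * ((2 * Real.pi * q * (A i j - A j i) : ℝ) : ℂ) from by push_cast; ring]

lemma Hmat_abs_le {n : ℕ} (q : ℝ) (A : Matrix (Fin n) (Fin n) ℝ) (i j : Fin n) :
    ‖Hmat q A i j‖ ≤ (|A i j| + |A j i|) / 2 := by
  rw [Hmat]
  rw [norm_mul, Complex.norm_real, Real.norm_eq_abs]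
  have h1 : ‖(Complex.exp
      (Complex.I * ((2 * Real.pi * q * (A i j - A j i) : ℝ) : ℂ)))‖ = 1 := by
    rw [Complex.norm_exp]
    norm_num [Complex.mul_re]
  rw [h1, mul_one, abs_div]
  have h := abs_add_le (A i j) (A j i)
  have h2 : |(2:ℝ)| = 2 := by norm_num
  rw [h2]
  linarith

lemma LU_posSemidef {n : ℕ} (q : ℝ) (A : Matrix (Fin n) (Fin n) ℝ) :
    (LU q A).PosSemidef := by
  have hermH := Hmat_isHermitian q A
  have hermD : (Dmat A).IsHermitian := by
    apply isHermitian_diagonal_of_self_adjoint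
    funext i
    simp [RCLike.star_def, Complex.conj_ofReal]
  have herm : (LU q A).IsHermitian := hermD.sub hermH
  refine posSemidef_iff_dotProduct_mulVec.mpr ⟨herm, fun x => ?_⟩
  rw [RCLike.nonneg_iff]
  have hx : star x ⬝ᵥ (LU q A) *ᵥ x
      = (∑ i, (dtilde A i : ℂ) * (star (x i) * x i))
        - ∑ i, ∑ j, star (x i) * (Hmat q A i j * x j) := by
    rw [LU, sub_mulVec, dotProduct_sub]
    congr 1
    · rw [Dmat]
      simp only [dotProduct, mulVec_diagonal, Pi.star_apply]
      exact Finset.sum_congr rfl fun i _ => by ring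
    · simp only [dotProduct, mulVec, Pi.star_apply]
      exact Finset.sum_congr rfl fun i _ => Finset.mul_sum _ _ _
  constructor
  · -- real part
    set a : Fin n → ℝ := fun i => ‖x i‖ with ha
    have hS1 : (∑ i, (dtilde A i : ℂ) * (star (x i) * x i)).re
        = ∑ i, dtilde A i * (a i) ^ 2 := by
      rw [Complex.re_sum]
      refine Finset.sum_congr rfl fun i _ => ?_
      have h : star (x i) * x i = ((Complex.normSq (x i) : ℝ) : ℂ) := by
        rw [RCLike.star_def, mul_comm, Complex.mul_conj]
      rw [h, ← Complex.ofReal_mul, Complex.ofReal_re, Complex.normSq_eq_norm_sq]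
    have key : ∑ i, ∑ j, (star (x i) * (Hmat q A i j * x j)).re
        ≤ ∑ i, ∑ j, ((|A i j| + |A j i|) / 2) * (((a i) ^ 2 + (a j) ^ 2) / 2) := by
      refine Finset.sum_le_sum fun i _ => Finset.sum_le_sum fun j _ => ?_
      have h1 := Complex.re_le_norm (star (x i) * (Hmat q A i j * x j))
      have h2 : ‖star (x i) * (Hmat q A i j * x j)‖
          = a i * ‖Hmat q A i j‖ * a j := by
        rw [norm_mul, norm_mul, RCLike.star_def, Complex.norm_conj]
        ring
      have h3 := Hmat_abs_le q A i j
      have h4 : a i * a j ≤ ((a i) ^ 2 + (a j) ^ 2) / 2 := by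
        nlinarith [sq_nonneg (a i - a j)]
      have h5 : (0:ℝ) ≤ a i := norm_nonneg _
      have h6 : (0:ℝ) ≤ a j := norm_nonneg _
      have h7 : (0:ℝ) ≤ ‖Hmat q A i j‖ := norm_nonneg _
      nlinarith
    have hsum : ∑ i, ∑ j, ((|A i j| + |A j i|) / 2) * (((a i) ^ 2 + (a j) ^ 2) / 2)
        = ∑ i, dtilde A i * (a i) ^ 2 := by
      have hsplit : ∀ i : Fin n, ∑ j, ((|A i j| + |A j i|) / 2) * (((a i) ^ 2 + (a j) ^ 2) / 2)
          = (∑ j, ((|A i j| + |A j i|) / 2) * ((a i) ^ 2 / 2))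
            + ∑ j, ((|A i j| + |A j i|) / 2) * ((a j) ^ 2 / 2) := fun i => by
        rw [← Finset.sum_add_distrib]
        exact Finset.sum_congr rfl fun j _ => by ring
      simp only [hsplit]
      rw [Finset.sum_add_distrib]
      have hcomm : ∑ i, ∑ j, ((|A i j| + |A j i|) / 2) * ((a j) ^ 2 / 2)
          = ∑ i, ∑ j, ((|A i j| + |A j i|) / 2) * ((a i) ^ 2 / 2) := by
        rw [Finset.sum_comm]
        exact Finset.sum_congr rfl fun i _ => Finset.sum_congr rfl fun j _ => by ring
      rw [hcomm, ← two_mul, Finset.mul_sum]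
      refine Finset.sum_congr rfl fun i _ => ?_
      have hJ : ∑ j, ((|A i j| + |A j i|) / 2) * ((a i) ^ 2 / 2)
          = (∑ j, (|A i j| + |A j i|)) * ((a i) ^ 2 / 4) := by
        rw [Finset.sum_mul]
        exact Finset.sum_congr rfl fun j _ => by ring
      rw [hJ, dtilde]
      ring
    rw [RCLike.re_to_complex, hx, Complex.sub_re, hS1, Complex.re_sum]
    have : ∑ i, (∑ j, star (x i) * (Hmat q A i j * x j)).re
        = ∑ i, ∑ j, (star (x i) * (Hmat q A i j * x j)).re :=
      Finset.sum_congr rfl fun i _ => Complex.re_sum _ _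
    rw [this]
    linarith [key, hsum.le, hsum.ge]
  · -- imaginary part
    have hs : star (star x ⬝ᵥ (LU q A) *ᵥ x) = star x ⬝ᵥ (LU q A) *ᵥ x := by
      rw [← star_dotProduct_star, star_star, star_mulVec, ← dotProduct_mulVec, herm]
    have := congrArg Complex.im hs
    simp only [RCLike.star_def, Complex.conj_im] at this
    rw [RCLike.im_to_complex]
    linarith

theorem normalized_magnetic_signed_laplacian_posSemidef
    (n : ℕ) (q : ℝ) (A : Matrix (Fin n) (Fin n) ℝ)
    (hd : ∀ i, 0 < dtilde A i) :
    (LN q A).PosSemidef := by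
  have hDherm : (Dhalf A)ᴴ = Dhalf A := by
    rw [Dhalf, diagonal_conjTranspose]
    apply congrArg Matrix.diagonal
    funext i
    simp [Complex.conj_ofReal]
  have h1 : Dhalf A * Dmat A * Dhalf A = 1 := by
    rw [Dhalf, Dmat, diagonal_mul_diagonal, diagonal_mul_diagonal, ← diagonal_one]
    apply congrArg Matrix.diagonal
    funext i
    have hdi := hd i
    have hs : Real.sqrt (dtilde A i) * Real.sqrt (dtilde A i) = dtilde A i :=
      Real.mul_self_sqrt hdi.le
    have hs0 : Real.sqrt (dtilde A i) ≠ 0 := ne_of_gt (Real.sqrt_pos.mpr hdi)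
    have : ((Real.sqrt (dtilde A i))⁻¹ * dtilde A i * (Real.sqrt (dtilde A i))⁻¹ : ℝ) = 1 := by
      rw [← hs]
      field_simp
      rw [Real.sqrt_sq (Real.sqrt_nonneg _)]
    push_cast
    norm_cast
  have hLN : LN q A = (Dhalf A)ᴴ * LU q A * Dhalf A := by
    rw [hDherm, LU, LN, mul_sub, sub_mul, h1]
  rw [hLN]
  exact (LU_posSemidef q A).conjTranspose_mul_mul_same _
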